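/- Suppose B·v = λ·v for a complex vector v indexed by the darts of G and λ ∈ ℂ. Then for every vertex k of G, (d_k − 1)·(v into k) = λ·(v from k). -/

import Mathlib

open Matrix Polynomial BigOperators

variable {V : Type*}

/-- The non-backtracking matrix of a graph `G`, indexed by darts (oriented edges):
`B[(k→l),(i→j)] = 1` if `j = k` and `i ≠ l`, else `0`. -/
def nbMatrix [DecidableEq V] (G : SimpleGraph V) : Matrix G.Dart G.Dart ℂ :=
  fun e f => if f.snd = e.fst ∧ f.fst ≠ e.snd then 1 else 0

/-- `(v into k) = ∑_{i adjacent to k} v_{i→k}`: the sum of `v` over all darts with target `k`. -/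
noncomputable def vInto [DecidableEq V] [Fintype V] (G : SimpleGraph V) [DecidableRel G.Adj]
    (v : G.Dart → ℂ) (k : V) : ℂ :=
  ∑ f : G.Dart, if f.snd = k then v f else 0

/-- `(v from k) = ∑_{i adjacent to k} v_{k→i}`: the sum of `v` over all darts with source `k`. -/
noncomputable def vFrom [DecidableEq V] [Fintype V] (G : SimpleGraph V) [DecidableRel G.Adj]
    (v : G.Dart → ℂ) (k : V) : ℂ :=
  ∑ f : G.Dart, if f.fst = k then v f else 0

/-! Sum the eigenvalue equation `(B v)_{k→l} = λ v_{k→l}` over the darts `k→l` leaving `k`.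
On the left, each dart `i→k` entering `k` contributes to `(B v)_{k→l}` for every neighbour
`l ≠ i` of `k`, hence is counted exactly `d_k − 1` times. -/

open Finset

namespace SimpleGraph

variable [DecidableEq V] [Fintype V] (G : SimpleGraph V) [DecidableRel G.Adj]

theorem card_dart_fst_eq_snd_ne {k w : V} (hadj : G.Adj k w) :
    #{e : G.Dart | e.fst = k ∧ e.snd ≠ w} = G.degree k - 1 := by
  have hd : (⟨(k, w), hadj⟩ : G.Dart) ∈ ({e : G.Dart | e.fst = k} : Finset G.Dart) := by simp
  rw [← dart_fst_fiber_card_eq_degree, ← card_erase_of_mem hd]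
  congr 1
  ext e
  simp only [mem_filter, mem_erase, mem_univ, true_and, ne_eq,
    Dart.ext_iff, Prod.ext_iff]
  tauto

end SimpleGraph

open SimpleGraph

section

variable [DecidableEq V] [Fintype V] {G : SimpleGraph V} [DecidableRel G.Adj]

theorem nbMatrix_mulVec_apply (v : G.Dart → ℂ) (e : G.Dart) :
    (nbMatrix G *ᵥ v) e = ∑ f : G.Dart, if f.snd = e.fst ∧ f.fst ≠ e.snd then v f else 0 := by
  simp only [mulVec, dotProduct, nbMatrix, ite_mul, one_mul, zero_mul]

theorem vFrom_smul (c : ℂ) (v : G.Dart → ℂ) (k : V) : vFrom G (c • v) k = c * vFrom G v k := by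
  simp only [vFrom, mul_sum, Pi.smul_apply, smul_eq_mul, mul_ite, mul_zero]

theorem vFrom_nbMatrix_mulVec (v : G.Dart → ℂ) (k : V) :
    vFrom G (nbMatrix G *ᵥ v) k = ((G.degree k : ℂ) - 1) * vInto G v k := by
  calc vFrom G (nbMatrix G *ᵥ v) k
      = ∑ f : G.Dart, ∑ e : G.Dart,
          if f.snd = k ∧ e.fst = k ∧ e.snd ≠ f.fst then v f else 0 := by
        rw [sum_comm]
        refine sum_congr rfl fun e _ => ?_
        rw [nbMatrix_mulVec_apply]
        split_ifs with he
        · refine sum_congr rfl fun f _ => ?_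
          subst he
          simp only [true_and, ne_comm]
        · exact (sum_eq_zero fun f _ => if_neg fun h => he h.2.1).symm
    _ = ∑ f : G.Dart, if f.snd = k then ((G.degree k : ℂ) - 1) * v f else 0 := by
        refine sum_congr rfl fun f _ => ?_
        split_ifs with hf
        · have hadj : G.Adj k f.fst := hf ▸ f.adj.symm
          simp only [hf, true_and]
          rw [← sum_filter, sum_const, card_dart_fst_eq_snd_ne G hadj, nsmul_eq_mul,
            Nat.cast_pred (G.degree_pos_iff_exists_adj k |>.mpr ⟨_, hadj⟩)]
        · exact sum_eq_zero fun e _ => if_neg fun h => hf h.1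
    _ = ((G.degree k : ℂ) - 1) * vInto G v k := by
        simp only [vInto, mul_sum, mul_ite, mul_zero]

end

theorem nbMatrix_eigenvector_into_from_general
    [DecidableEq V] [Fintype V] (G : SimpleGraph V) [DecidableRel G.Adj]
    (v : G.Dart → ℂ) (μ : ℂ)
    (heig : (nbMatrix G).mulVec v = μ • v) (k : V) :
    ((G.degree k : ℂ) - 1) * vInto G v k = μ * vFrom G v k := by
  rw [← vFrom_nbMatrix_mulVec, heig, vFrom_smul]

/-- If `B·v = λ·v` then for every vertex `k`,
`(d_k − 1)·(v into k) = λ·(v from k)`. -/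
theorem nbMatrix_eigenvector_into_from
    [DecidableEq V] [Fintype V] (G : SimpleGraph V) [DecidableRel G.Adj]
    (hconn : G.Connected) (v : G.Dart → ℂ) (μ : ℂ)
    (heig : (nbMatrix G).mulVec v = μ • v) (k : V) :
    ((G.degree k : ℂ) - 1) * vInto G v k = μ * vFrom G v k :=
  nbMatrix_eigenvector_into_from_general G v μ heig k
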